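/- arXiv:math-ph/0112036 — 2 statements merged into one kernel-verified Lean document; each statement's English description precedes it below -/
import Mathlib

section
/- Let H be a closed symmetric operator on a complex Hilbert space h with deficiency index n₊(H) = 0, i.e. ker(i − H*) = {0}. If −G is the generator of a strongly continuous contraction semigroup on h and G extends −iH (that is, dom H ⊆ dom G and Gu = −iHu for u ∈ dom H), and moreover dom H is dense, then dom G = dom H, i.e. −G = iH. -/
open scoped InnerProductSpace

/-- A strongly continuous one-parameter semigroup of contractions on `h`. -/
structure ContractionSemigroup (h : Type*) [NormedAddCommGroup h]
    [InnerProductSpace ℂ h] where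
  W : ℝ → h →L[ℂ] h
  w_zero : W 0 = ContinuousLinearMap.id ℂ h
  w_add : ∀ s t : ℝ, 0 ≤ s → 0 ≤ t → W (s + t) = (W s).comp (W t)
  contractive : ∀ t : ℝ, 0 ≤ t → ‖W t‖ ≤ 1
  strong_continuity : ∀ u : h, ContinuousOn (fun t => W t u) (Set.Ici 0)

/-- `-G`, with domain `D`, is the infinitesimal generator of the semigroup `S`:
`D` is exactly the set of vectors where the (right-)derivative at `t = 0`
exists, and there this derivative equals `-(G u)`; moreover `D` is dense. -/
structure IsGenerator {h : Type*} [NormedAddCommGroup h] [InnerProductSpace ℂ h]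
    (S : ContractionSemigroup h) (D : Set h) (G : h → h) : Prop where
  dense : Dense D
  mem_iff : ∀ u : h, u ∈ D ↔
    ∃ L : h, HasDerivWithinAt (fun s => S.W s u) L (Set.Ici 0) 0
  deriv : ∀ u ∈ D, HasDerivWithinAt (fun s => S.W s u) (-(G u)) (Set.Ici 0) 0

section Aux

variable {h : Type*} [NormedAddCommGroup h] [InnerProductSpace ℂ h]

/-- The domain of a generator is closed under subtraction, and `G` is subtractive there. -/
lemma aux_sub_mem {S : ContractionSemigroup h} {D : Set h} {G : h → h}
    (hgen : IsGenerator S D G) {u v : h} (hu : u ∈ D) (hv : v ∈ D) :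
    u - v ∈ D ∧ G (u - v) = G u - G v := by
  have hdu := hgen.deriv u hu
  have hdv := hgen.deriv v hv
  have heq : (fun s : ℝ => S.W s (u - v)) = fun s => S.W s u - S.W s v :=
    funext fun s => map_sub (S.W s) u v
  have hsub : HasDerivWithinAt (fun s : ℝ => S.W s (u - v)) (-(G u) - -(G v))
      (Set.Ici 0) 0 := by
    rw [heq]; exact hdu.sub hdv
  have hmem : u - v ∈ D := (hgen.mem_iff _).2 ⟨_, hsub⟩
  refine ⟨hmem, ?_⟩
  have e1 := (hgen.deriv _ hmem).derivWithin (uniqueDiffOn_Ici 0 0 Set.self_mem_Ici)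
  have e2 := hsub.derivWithin (uniqueDiffOn_Ici 0 0 Set.self_mem_Ici)
  have e3 : -(G (u - v)) = -(G u) - -(G v) := e1.symm.trans e2
  exact neg_injective (e3.trans (by abel))

/-- Dissipativity: `Re ⟪u, G u⟫ ≥ 0` on the domain of the generator. -/
lemma aux_dissip {S : ContractionSemigroup h} {D : Set h} {G : h → h}
    (hgen : IsGenerator S D G) {u : h} (hu : u ∈ D) :
    0 ≤ RCLike.re (⟪u, G u⟫_ℂ) := by
  have hd := hgen.deriv u hu
  have hW0 : S.W 0 u = u := by rw [S.w_zero]; rfl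
  have hinner := HasDerivWithinAt.inner ℂ hd hd
  rw [hW0] at hinner
  have hre := (RCLike.reCLM (K := ℂ)).hasFDerivAt.comp_hasDerivWithinAt (x := (0:ℝ)) hinner
  have hval : ∀ s : ℝ, ((RCLike.reCLM (K := ℂ)) ∘ fun t => ⟪S.W t u, S.W t u⟫_ℂ) s
      = ‖S.W s u‖ ^ 2 := by
    intro s
    simp only [Function.comp_apply, RCLike.reCLM_apply]
    exact inner_self_eq_norm_sq _
  have hcle : RCLike.reCLM (K := ℂ) (⟪u, -(G u)⟫_ℂ + ⟪-(G u), u⟫_ℂ) ≤ 0 := by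
    have hslope := hasDerivWithinAt_iff_tendsto_slope.mp hre
    rw [Set.Ici_sdiff_left] at hslope
    refine le_of_tendsto hslope ?_
    filter_upwards [self_mem_nhdsWithin] with t ht
    have ht0 : 0 < t := ht
    rw [slope_def_module]
    have hcontr : ‖S.W t u‖ ≤ ‖u‖ := by
      have h1 := (S.W t).le_opNorm u
      have h2 := S.contractive t ht0.le
      nlinarith [norm_nonneg u]
    have hle : ((RCLike.reCLM (K := ℂ)) ∘ fun t => ⟪S.W t u, S.W t u⟫_ℂ) t
        - ((RCLike.reCLM (K := ℂ)) ∘ fun t => ⟪S.W t u, S.W t u⟫_ℂ) 0 ≤ 0 := by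
      rw [hval t, hval 0, hW0]
      nlinarith [norm_nonneg (S.W t u), norm_nonneg u]
    have hinv : (0:ℝ) ≤ (t - 0)⁻¹ := by
      rw [sub_zero]; exact (inv_nonneg).2 ht0.le
    rw [smul_eq_mul]
    exact mul_nonpos_iff.mpr (Or.inl ⟨hinv, hle⟩)
  have hrw : RCLike.re (⟪u, -(G u)⟫_ℂ + ⟪-(G u), u⟫_ℂ)
      = -(2 * RCLike.re (⟪u, G u⟫_ℂ)) := by
    rw [map_add, inner_neg_right, inner_neg_left, map_neg, map_neg,
      inner_re_symm (G u) u]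
    ring
  rw [RCLike.reCLM_apply, hrw] at hcle
  linarith

/-- The Hille–Yosida type bound `‖u‖ ≤ ‖u + G u‖` on the domain of the generator. -/
lemma aux_norm_le {S : ContractionSemigroup h} {D : Set h} {G : h → h}
    (hgen : IsGenerator S D G) {u : h} (hu : u ∈ D) :
    ‖u‖ ≤ ‖u + G u‖ := by
  have h1 := aux_dissip hgen hu
  have h2 : ‖u‖ ^ 2 ≤ RCLike.re (⟪u, u + G u⟫_ℂ) := by
    rw [inner_add_right, map_add, inner_self_eq_norm_sq]
    linarith
  have h3 : RCLike.re (⟪u, u + G u⟫_ℂ) ≤ ‖u‖ * ‖u + G u‖ := re_inner_le_norm _ _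
  nlinarith [norm_nonneg u, norm_nonneg (u + G u)]

end Aux

/-- Let `H` be a closed symmetric densely defined operator with
deficiency index `n₊(H) = 0`, i.e. `ker(i - H*) = {0}`.  If `-G` generates a C₀
contraction semigroup and `G` extends `-iH`, then `dom G = dom H`. -/
theorem stmt_5 {h : Type*} [NormedAddCommGroup h] [InnerProductSpace ℂ h]
    [CompleteSpace h]
    (H : h →ₗ.[ℂ] h) (hclosed : H.IsClosed)
    (hdense : Dense (H.domain : Set h))
    (hsym : ∀ v w : H.domain, ⟪H v, (w : h)⟫_ℂ = ⟪(v : h), H w⟫_ℂ)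
    (hdef : ∀ u : h, ∀ hu : u ∈ H.adjoint.domain,
      H.adjoint ⟨u, hu⟩ = Complex.I • u → u = 0)
    (S : ContractionSemigroup h) (D : Set h) (G : h → h)
    (hgen : IsGenerator S D G)
    (hsub : (H.domain : Set h) ⊆ D)
    (hext : ∀ u : H.domain, G (u : h) = -(Complex.I • H u)) :
    D = (H.domain : Set h) := by
  classical
  -- the operator `T = I - iH` on `dom H`
  set T : H.domain →ₗ[ℂ] h := H.domain.subtype - (Complex.I • H.toFun) with hTdef
  have hTapp : ∀ u : H.domain, T u = (u : h) - Complex.I • H u := fun u => rfl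
  -- `⟪u, H u⟫` is real
  have hreal : ∀ u : H.domain, (starRingEnd ℂ) ⟪(u : h), H u⟫_ℂ = ⟪(u : h), H u⟫_ℂ := by
    intro u
    rw [inner_conj_symm]
    exact hsym u u
  -- the key norm identity `‖T u‖² = ‖u‖² + ‖H u‖²`
  have hnormT : ∀ u : H.domain, ‖T u‖ ^ 2 = ‖(u : h)‖ ^ 2 + ‖H u‖ ^ 2 := by
    intro u
    rw [hTapp, @norm_sub_sq ℂ]
    have h2 : RCLike.re ⟪(u : h), Complex.I • H u⟫_ℂ = 0 := by
      rw [inner_smul_right]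
      have him : (⟪(u : h), H u⟫_ℂ).im = 0 := Complex.conj_eq_iff_im.mp (hreal u)
      simp [RCLike.re_to_complex, Complex.mul_re, him]
    have h3 : ‖Complex.I • H u‖ = ‖H u‖ := by
      rw [norm_smul]; simp
    rw [h2, h3]
    ring
  -- `T` is norm-increasing, hence its range is closed
  have hTlow : ∀ u : H.domain, ‖(u : h)‖ ≤ ‖T u‖ ∧ ‖H u‖ ≤ ‖T u‖ := by
    intro u
    have := hnormT u
    constructor <;> nlinarith [norm_nonneg (T u), norm_nonneg ((u : h)), norm_nonneg (H u)]
  have hclosedR : IsClosed ((LinearMap.range T : Submodule ℂ h) : Set h) := by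
    refine isClosed_of_closure_subset ?_
    intro w hw
    obtain ⟨x, hxR, hxw⟩ := mem_closure_iff_seq_limit.mp hw
    choose useq huseq using hxR
    have hcx : CauchySeq x := hxw.cauchySeq
    have hcau1 : CauchySeq (fun n => (useq n : h)) := by
      rw [Metric.cauchySeq_iff] at hcx ⊢
      intro ε hε
      obtain ⟨N, hN⟩ := hcx ε hε
      refine ⟨N, fun m hm n hn => ?_⟩
      have := hN m hm n hn
      rw [dist_eq_norm] at this ⊢
      calc ‖(useq m : h) - useq n‖ = ‖((useq m - useq n : H.domain) : h)‖ := by norm_cast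
        _ ≤ ‖T (useq m - useq n)‖ := (hTlow _).1
        _ = ‖x m - x n‖ := by rw [map_sub, huseq m, huseq n]
        _ < ε := this
    have hcau2 : CauchySeq (fun n => H (useq n)) := by
      rw [Metric.cauchySeq_iff] at hcx ⊢
      intro ε hε
      obtain ⟨N, hN⟩ := hcx ε hε
      refine ⟨N, fun m hm n hn => ?_⟩
      have := hN m hm n hn
      rw [dist_eq_norm] at this ⊢
      calc ‖H (useq m) - H (useq n)‖ = ‖H (useq m - useq n)‖ := by rw [H.map_sub]
        _ ≤ ‖T (useq m - useq n)‖ := (hTlow _).2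
        _ = ‖x m - x n‖ := by rw [map_sub, huseq m, huseq n]
        _ < ε := this
    obtain ⟨u0, hu0⟩ := cauchySeq_tendsto_of_complete hcau1
    obtain ⟨y0, hy0⟩ := cauchySeq_tendsto_of_complete hcau2
    have hgraph : (u0, y0) ∈ H.graph := by
      refine hclosed.mem_of_tendsto (hu0.prodMk_nhds hy0) (Filter.Eventually.of_forall ?_)
      exact fun n => H.mem_graph (useq n)
    obtain ⟨d, hd1, hd2⟩ := H.mem_graph_iff.mp hgraph
    have hlim : Filter.Tendsto x Filter.atTop (nhds (u0 - Complex.I • y0)) := by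
      have hxeq : x = fun n => (useq n : h) - Complex.I • H (useq n) :=
        funext fun n => by rw [← huseq n, hTapp]
      rw [hxeq]
      exact hu0.sub (hy0.const_smul _)
    have hweq : w = u0 - Complex.I • y0 := tendsto_nhds_unique hxw hlim
    refine ⟨d, ?_⟩
    rw [hTapp, hd1, hd2, hweq]
  -- the range of `T` is all of `h`
  haveI : CompleteSpace (LinearMap.range T) := hclosedR.completeSpace_coe
  have hrange : LinearMap.range T = ⊤ := by
    rw [← Submodule.orthogonal_eq_bot_iff, Submodule.eq_bot_iff]
    intro v hv
    have hv' : ∀ u : H.domain, ⟪(T u : h), v⟫_ℂ = 0 := fun u =>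
      (Submodule.mem_orthogonal _ v).mp hv _ ⟨u, rfl⟩
    have hw : ∀ u : H.domain, ⟪Complex.I • v, (u : h)⟫_ℂ = ⟪v, H u⟫_ℂ := by
      intro u
      have h1 : ⟪v, (u : h) - Complex.I • H u⟫_ℂ = 0 := by
        rw [← inner_conj_symm, ← hTapp, hv' u, map_zero]
      rw [inner_sub_right, inner_smul_right, sub_eq_zero] at h1
      rw [inner_smul_left]
      have hcI : (starRingEnd ℂ) Complex.I = -Complex.I := Complex.conj_I
      rw [hcI, h1, show -Complex.I * (Complex.I * ⟪v, H u⟫_ℂ)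
        = -(Complex.I * Complex.I) * ⟪v, H u⟫_ℂ from by ring, Complex.I_mul_I]
      ring
    have hvmem : v ∈ H.adjoint.domain :=
      LinearPMap.mem_adjoint_domain_of_exists (T := H) v ⟨Complex.I • v, hw⟩
    have hadj : H.adjoint ⟨v, hvmem⟩ = Complex.I • v :=
      LinearPMap.adjoint_apply_eq hdense ⟨v, hvmem⟩ hw
    exact hdef v hvmem hadj
  -- now the main argument
  refine Set.Subset.antisymm ?_ hsub
  intro v hv
  obtain ⟨u, hu⟩ := LinearMap.range_eq_top.mp hrange (v + G v)
  have huD : (u : h) ∈ D := hsub u.2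
  have huG : (u : h) + G (u : h) = v + G v := by
    rw [hext u, ← hu, hTapp]
    abel
  obtain ⟨hdmem, hdG⟩ := aux_sub_mem hgen hv huD
  have hzero : (v - (u : h)) + G (v - (u : h)) = 0 := by
    rw [hdG, show v - (u : h) + (G v - G (u : h))
      = (v + G v) - ((u : h) + G (u : h)) from by abel, huG, sub_self]
  have hle := aux_norm_le hgen hdmem
  rw [hzero, norm_zero] at hle
  have : v = (u : h) := by
    have := norm_nonneg (v - (u : h))
    have hnz : ‖v - (u : h)‖ = 0 := le_antisymm hle this
    rwa [norm_eq_zero, sub_eq_zero] at hnz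
  rw [this]
  exact u.2
end

section
/- Let H be a closed symmetric densely defined operator on a complex Hilbert space, let N₊ = ker(i − H*) and N₋ = ker(−i − H*), and let V : N₊ → N₋ be a linear isometry onto a (closed) subspace of N₋. Define H_V by dom H_V = {u + v + Vv : u ∈ dom H, v ∈ N₊} and H_V(u + v + Vv) = Hu + iv − iVv. Then H_V is a symmetric extension of H. -/
open scoped InnerProductSpace

/-- The deficiency space `N₊ = ker(i - H*)` of an unbounded operator, as a set. -/
def defectPlus {h : Type*} [NormedAddCommGroup h] [InnerProductSpace ℂ h]
    [CompleteSpace h] (H : h →ₗ.[ℂ] h) : Set h :=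
  {v | ∃ hv : v ∈ H.adjoint.domain, H.adjoint ⟨v, hv⟩ = Complex.I • v}

/-- The deficiency space `N₋ = ker(-i - H*)` of an unbounded operator, as a set. -/
def defectMinus {h : Type*} [NormedAddCommGroup h] [InnerProductSpace ℂ h]
    [CompleteSpace h] (H : h →ₗ.[ℂ] h) : Set h :=
  {v | ∃ hv : v ∈ H.adjoint.domain, H.adjoint ⟨v, hv⟩ = -(Complex.I • v)}

/-!
The adjoint `H*` extends `H_V`, so it suffices that the boundary form
`⟪H* a, b⟫ - ⟪a, H* b⟫` vanishes on `dom H_V`. By symmetry of `H` and the definition of `H*`,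
this form is blind to components in `dom H`; on `N₊ ∔ N₋` it equals
`-2i (⟪v₁, v₂⟫ - ⟪V v₁, V v₂⟫)`, which is zero because `V` is isometric.
-/

namespace LinearPMap

variable {𝕜 E : Type*} [RCLike 𝕜] [NormedAddCommGroup E] [InnerProductSpace 𝕜 E]
  [CompleteSpace E] {T : E →ₗ.[𝕜] E}

theorem inner_add_adjoint_sub_inner_add_adjoint (hT : Dense (T.domain : Set E))
    (hsym : T.IsFormalAdjoint T) (u₁ u₂ : T.domain) (x₁ x₂ : T†.domain) :
    ⟪T u₁ + T† x₁, (u₂ : E) + x₂⟫_𝕜 - ⟪(u₁ : E) + x₁, T u₂ + T† x₂⟫_𝕜 =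
      ⟪T† x₁, (x₂ : E)⟫_𝕜 - ⟪(x₁ : E), T† x₂⟫_𝕜 := by
  have hadj : T†.IsFormalAdjoint T := adjoint_isFormalAdjoint hT
  simp only [inner_add_left, inner_add_right]
  rw [hsym u₁ u₂, hadj x₁ u₂, hadj.symm u₁ x₂]
  ring

end LinearPMap

open LinearPMap Complex

theorem inner_I_smul_sub_sub_inner_I_smul_sub {E : Type*} [NormedAddCommGroup E]
    [InnerProductSpace ℂ E] (v₁ w₁ v₂ w₂ : E) :
    ⟪I • v₁ - I • w₁, v₂ + w₂⟫_ℂ - ⟪v₁ + w₁, I • v₂ - I • w₂⟫_ℂ =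
      -2 * I * (⟪v₁, v₂⟫_ℂ - ⟪w₁, w₂⟫_ℂ) := by
  simp only [inner_add_left, inner_add_right, inner_sub_left, inner_sub_right,
    inner_smul_left, inner_smul_right, conj_I]
  ring

theorem add_mem_adjoint_domain_of_mem_defect {h : Type*} [NormedAddCommGroup h]
    [InnerProductSpace ℂ h] [CompleteSpace h] {H : h →ₗ.[ℂ] h} {v w : h}
    (hv : v ∈ defectPlus H) (hw : w ∈ defectMinus H) :
    ∃ hvw : v + w ∈ H†.domain, H† ⟨v + w, hvw⟩ = I • v - I • w := by
  obtain ⟨hv, hHv⟩ := hv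
  obtain ⟨hw, hHw⟩ := hw
  refine ⟨H†.domain.add_mem hv hw, ?_⟩
  rw [show (⟨v + w, _⟩ : H†.domain) = ⟨v, hv⟩ + ⟨w, hw⟩ from rfl, LinearPMap.map_add, hHv, hHw,
    sub_eq_add_neg]

theorem stmt_15_general {h : Type*} [NormedAddCommGroup h] [InnerProductSpace ℂ h]
    [CompleteSpace h]
    (H : h →ₗ.[ℂ] h)
    (hdense : Dense (H.domain : Set h))
    (hsym : ∀ v w : H.domain, ⟪H v, (w : h)⟫_ℂ = ⟪(v : h), H w⟫_ℂ)
    (V : h →ₗ[ℂ] h)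
    (hVmap : ∀ v ∈ defectPlus H, V v ∈ defectMinus H)
    (hViso : ∀ v ∈ defectPlus H, ∀ w ∈ defectPlus H, ⟪V v, V w⟫_ℂ = ⟪v, w⟫_ℂ) :
    ∀ (u₁ u₂ : H.domain) (v₁ v₂ : h), v₁ ∈ defectPlus H → v₂ ∈ defectPlus H →
      ⟪H u₁ + Complex.I • v₁ - Complex.I • V v₁,
          (u₂ : h) + v₂ + V v₂⟫_ℂ =
        ⟪(u₁ : h) + v₁ + V v₁,
          H u₂ + Complex.I • v₂ - Complex.I • V v₂⟫_ℂ := by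
  intro u₁ u₂ v₁ v₂ hv₁ hv₂
  obtain ⟨hx₁, hHx₁⟩ := add_mem_adjoint_domain_of_mem_defect hv₁ (hVmap v₁ hv₁)
  obtain ⟨hx₂, hHx₂⟩ := add_mem_adjoint_domain_of_mem_defect hv₂ (hVmap v₂ hv₂)
  have hboundary := inner_add_adjoint_sub_inner_add_adjoint hdense hsym u₁ u₂ ⟨_, hx₁⟩ ⟨_, hx₂⟩
  rw [hHx₁, hHx₂, inner_I_smul_sub_sub_inner_I_smul_sub, hViso v₁ hv₁ v₂ hv₂, sub_self,
    mul_zero] at hboundary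
  rw [add_assoc, add_assoc, add_sub_assoc, add_sub_assoc]
  exact sub_eq_zero.mp hboundary

/-- von Neumann extensions.  Let `H` be closed, symmetric,
densely defined, and let `V` be a linear isometry from `N₊` into `N₋`.  The
extension `H_V`, with `dom H_V = {u + v + Vv : u ∈ dom H, v ∈ N₊}` and
`H_V (u + v + Vv) = Hu + iv - iVv`, is a symmetric extension of `H`. -/
theorem stmt_15 {h : Type*} [NormedAddCommGroup h] [InnerProductSpace ℂ h]
    [CompleteSpace h]
    (H : h →ₗ.[ℂ] h) (hclosed : H.IsClosed)
    (hdense : Dense (H.domain : Set h))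
    (hsym : ∀ v w : H.domain, ⟪H v, (w : h)⟫_ℂ = ⟪(v : h), H w⟫_ℂ)
    (V : h →ₗ[ℂ] h)
    (hVmap : ∀ v ∈ defectPlus H, V v ∈ defectMinus H)
    (hViso : ∀ v ∈ defectPlus H, ∀ w ∈ defectPlus H, ⟪V v, V w⟫_ℂ = ⟪v, w⟫_ℂ) :
    ∀ (u₁ u₂ : H.domain) (v₁ v₂ : h), v₁ ∈ defectPlus H → v₂ ∈ defectPlus H →
      ⟪H u₁ + Complex.I • v₁ - Complex.I • V v₁,
          (u₂ : h) + v₂ + V v₂⟫_ℂ =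
        ⟪(u₁ : h) + v₁ + V v₁,
          H u₂ + Complex.I • v₂ - Complex.I • V v₂⟫_ℂ :=
  stmt_15_general H hdense hsym V hVmap hViso
end
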